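/- Let V be a finite set, Ṽ ⊆ V, and w a finite path on V. Then: (i) every element of Ṽ occurs at most once among the entries of the path 𝔏_{Ṽ}(w); and consequently (ii) the partial loop-erasing operator 𝔏_{Ṽ} is idempotent, i.e. 𝔏_{Ṽ}(𝔏_{Ṽ}(w)) = 𝔏_{Ṽ}(w). In particular, the full loop erasure 𝔏(w) = 𝔏_V(w) is a self-avoiding path. -/

import Mathlib

open MeasureTheory

namespace LERW

variable {V : Type*} [DecidableEq V]

/-- The suffix of `l` strictly after the last occurrence of `a` in `l`
(`l` itself if `a` does not occur in `l`). -/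
def dropToLastOcc (a : V) (l : List V) : List V :=
  (l.reverse.takeWhile (fun z => z ≠ a)).reverse

lemma dropToLastOcc_length_le (a : V) (l : List V) :
    (dropToLastOcc a l).length ≤ l.length := by
  unfold dropToLastOcc
  calc ((l.reverse.takeWhile (fun z => z ≠ a)).reverse).length
      = (l.reverse.takeWhile (fun z => z ≠ a)).length := by simp
    _ ≤ l.reverse.length := (List.takeWhile_sublist _).length_le
    _ = l.length := by simp

/-- Partial loop erasure `𝔏_S` of a finite path, associated with a set `S` of vertices. -/
def PLE (S : Finset V) : List V → List V
  | [] => []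
  | a :: rest =>
    if a ∈ S then
      if a = (a :: rest).getLast (List.cons_ne_nil a rest) then [a]
      else a :: PLE S (dropToLastOcc a rest)
    else
      if rest = [] then [a]
      else a :: PLE S rest
termination_by l => l.length
decreasing_by
  · simpa using Nat.lt_succ_of_le (dropToLastOcc_length_le a rest)
  · simp

variable [Fintype V]

/-- The (full) loop erasure `𝔏 = 𝔏_V`. -/
def LE : List V → List V := PLE Finset.univ

/-- Iterated partial loop erasure `𝔏_{W m} ∘ ⋯ ∘ 𝔏_{W 2} ∘ 𝔏_{W 1}`. -/
def iterPLE (W : ℕ → Finset V) : ℕ → List V → List V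
  | 0, l => l
  | n + 1, l => PLE (W (n + 1)) (iterPLE W n l)

/-- The remaining suffix `w|_{[n_j , η]}` of the loop-erasing walk of `𝔏` the first time
its current value equals `b` (`[]` if this never happens). -/
def LEsuffixAt (b : V) : List V → List V
  | [] => []
  | a :: rest =>
    if a = b then a :: rest
    else if a = (a :: rest).getLast (List.cons_ne_nil a rest) then []
    else LEsuffixAt b (dropToLastOcc a rest)
termination_by l => l.length
decreasing_by
  simpa using Nat.lt_succ_of_le (dropToLastOcc_length_le a rest)

/-- Entry time `τ_A` into `A ⊆ V`, valued in `ℕ∞`. -/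
noncomputable def entryTime (A : Finset V) (ω : ℕ → V) : ℕ∞ :=
  sInf {m : ℕ∞ | ∃ n : ℕ, m = (n : ℕ∞) ∧ ω n ∈ A}

/-- Entry time `τ_A` as a natural number (junk value `0` when `A` is never visited). -/
noncomputable def entryTimeNat (A : Finset V) (ω : ℕ → V) : ℕ :=
  sInf {n : ℕ | ω n ∈ A}

/-- The random finite path `X|_{[0, τ_A]} = (X_0, X_1, …, X_{τ_A})`. -/
noncomputable def stoppedPath (A : Finset V) (ω : ℕ → V) : List V :=
  (List.range (entryTimeNat A ω + 1)).map ω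

/-- Iterated hitting times `τ̊_W^{(n)}` of `W`, valued in `ℕ∞` (with the convention
`τ̊_W^{(0)} = 0`). -/
noncomputable def iterHit (W : Finset V) (ω : ℕ → V) : ℕ → ℕ∞
  | 0 => 0
  | n + 1 => sInf {m : ℕ∞ | ∃ k : ℕ, m = (k : ℕ∞) ∧ iterHit W ω n < (k : ℕ∞) ∧ ω k ∈ W}

/-- The time `τ̊_W^{(n)} ∧ τ_A`, as a natural number. -/
noncomputable def traceTime (W A : Finset V) (ω : ℕ → V) (n : ℕ) : ℕ :=
  (iterHit W ω n ⊓ entryTime A ω).toNat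

variable [MeasurableSpace V]

/-- The trace process `X̃_n = X_{τ̊_W^{(n)} ∧ τ_A}` (so `X̃_0 = X_0`). -/
noncomputable def traceProc (W A : Finset V) (ω : ℕ → V) (n : ℕ) : V :=
  ω (traceTime W A ω n)

/-- The Green function `G_B(x, y) = 𝔼_x(#{0 ≤ n < τ_{V∖B} : X_n = y})`. -/
noncomputable def green (μ : V → Measure (ℕ → V)) (B : Finset V) (x y : V) : ℝ :=
  ∑' n : ℕ, (μ x {ω | ω n = y ∧ ∀ k ≤ n, ω k ∈ B}).toReal

/-!
`PLE S l` is a sublist of `l`, and after emitting a vertex `a ∈ S` it continues from the suffix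
after the last occurrence of `a`, so `a` is never emitted again. Conversely, a path in which
every vertex of `S` occurs at most once has no loop at a vertex of `S` to erase, so `PLE S`
fixes it; idempotence follows.
-/

omit [Fintype V] [MeasurableSpace V]

lemma dropToLastOcc_suffix (a : V) (l : List V) : dropToLastOcc a l <:+ l :=
  List.reverse_prefix.1 (by simpa [dropToLastOcc] using List.takeWhile_prefix _)

lemma notMem_dropToLastOcc (a : V) (l : List V) : a ∉ dropToLastOcc a l := fun h => by
  simpa using List.mem_takeWhile_imp (List.mem_reverse.1 h)

lemma dropToLastOcc_eq_self {a : V} {l : List V} (h : a ∉ l) : dropToLastOcc a l = l := by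
  rw [dropToLastOcc, List.takeWhile_eq_self_iff.2, List.reverse_reverse]
  intro x hx
  simpa using ne_of_mem_of_not_mem (List.mem_reverse.1 hx) h

lemma PLE_sublist (S : Finset V) (l : List V) : (PLE S l).Sublist l := by
  induction l using PLE.induct S with
  | case1 => simp [PLE]
  | case2 a rest ha hlast => simp [PLE, ha, ← hlast]
  | case3 a rest ha hlast ih =>
    rw [PLE, if_pos ha, if_neg hlast]
    exact (ih.trans (dropToLastOcc_suffix a rest).sublist).cons_cons a
  | case4 a ha => simp [PLE, ha]
  | case5 a rest ha hrest ih =>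
    rw [PLE, if_neg ha, if_neg hrest]
    exact ih.cons_cons a

lemma PLE_count_le_one (S : Finset V) (l : List V) : ∀ a ∈ S, (PLE S l).count a ≤ 1 := by
  induction l using PLE.induct S with
  | case1 => simp [PLE]
  | case2 a rest ha hlast =>
    intro b _
    simp only [PLE, ha, ← hlast, if_true]
    exact List.nodup_iff_count_le_one.1 (List.nodup_singleton a) b
  | case3 a rest ha hlast ih =>
    intro b hb
    rw [PLE, if_pos ha, if_neg hlast]
    rcases eq_or_ne a b with rfl | hab
    · have : a ∉ PLE S (dropToLastOcc a rest) :=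
        fun h => notMem_dropToLastOcc a rest ((PLE_sublist S _).subset h)
      simp [List.count_eq_zero.2 this]
    · simpa [List.count_cons, hab] using ih b hb
  | case4 a ha =>
    intro b _
    simp only [PLE, ha, if_false, if_true]
    exact List.nodup_iff_count_le_one.1 (List.nodup_singleton a) b
  | case5 a rest ha hrest ih =>
    intro b hb
    have hab : a ≠ b := fun h => ha (h ▸ hb)
    rw [PLE, if_neg ha, if_neg hrest]
    simpa [List.count_cons, hab] using ih b hb

lemma notMem_of_count_cons_le_one {a : V} {l : List V} (h : (a :: l).count a ≤ 1) : a ∉ l := by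
  rw [List.count_cons_self] at h
  exact List.count_eq_zero.1 (by omega)

lemma count_le_one_of_cons {S : Finset V} {a : V} {l : List V}
    (h : ∀ b ∈ S, (a :: l).count b ≤ 1) : ∀ b ∈ S, l.count b ≤ 1 :=
  fun b hb => ((List.sublist_cons_self a l).count_le b).trans (h b hb)

lemma PLE_eq_self_of_count_le_one {S : Finset V} {l : List V}
    (h : ∀ a ∈ S, l.count a ≤ 1) : PLE S l = l := by
  induction l using PLE.induct S with
  | case1 => simp [PLE]
  | case2 a rest ha hlast =>
    obtain rfl : rest = [] := by
      by_contra hrest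
      have hmem : (a :: rest).getLast (List.cons_ne_nil a rest) ∈ rest := by
        rw [List.getLast_cons hrest]
        exact List.getLast_mem hrest
      rw [← hlast] at hmem
      exact notMem_of_count_cons_le_one (h a ha) hmem
    simp [PLE, ha]
  | case3 a rest ha hlast ih =>
    have hdrop := dropToLastOcc_eq_self (notMem_of_count_cons_le_one (h a ha))
    rw [hdrop] at ih
    rw [PLE, if_pos ha, if_neg hlast, hdrop, ih (count_le_one_of_cons h)]
  | case4 a ha => simp [PLE, ha]
  | case5 a rest ha hrest ih =>
    rw [PLE, if_neg ha, if_neg hrest, ih (count_le_one_of_cons h)]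

theorem PLE_count_le_one_and_idempotent
    {V : Type*} [Fintype V] [DecidableEq V] (S : Finset V) (w : List V) :
    (∀ a ∈ S, (PLE S w).count a ≤ 1) ∧
      PLE S (PLE S w) = PLE S w ∧ (LE w).Nodup :=
  ⟨PLE_count_le_one S w, PLE_eq_self_of_count_le_one (PLE_count_le_one S w),
    List.nodup_iff_count_le_one.2 fun a => PLE_count_le_one _ w a (Finset.mem_univ a)⟩

end LERW
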